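/- arXiv:2010.03974 — 2 statements merged into one kernel-verified Lean document; each statement's English description precedes it below -/
import Mathlib

section
/- Let f : M → ℂ be a non-zero abelian solution of the functional equation f(xσ(y)) + f(τ(y)x) = 2f(x)f(y) for all x, y ∈ M. Then there exists a multiplicative function χ : M → ℂ (χ(xy) = χ(x)χ(y) for all x, y ∈ M) such that χ∘σ∘τ = χ∘τ∘σ, χ∘σ = χ or χ∘τ = χ, and f = (χ + χ∘σ∘τ)/2. -/
/-- A function `f : M → ℂ` on a monoid is abelian if
`f(x₁x₂⋯xₙ) = f(x_{ε(1)}x_{ε(2)}⋯x_{ε(n)})` for every `n ≥ 2`, all `x₁, …, xₙ ∈ M`,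
and every permutation `ε` of `{1, …, n}`. -/
def IsAbelianFn {M : Type*} [Monoid M] (f : M → ℂ) : Prop :=
  ∀ n : ℕ, 2 ≤ n → ∀ (x : Fin n → M) (ε : Equiv.Perm (Fin n)),
    f (List.ofFn x).prod = f (List.ofFn (x ∘ ε)).prod

/-! Since `f` is abelian, the equation reads `f(x σ y) + f(x τ y) = 2 f(x) f(y)`. Expanding
`f(xyz)` once through `σ` and once through `τ` and comparing at `x = 1` gives `(f ∘ σ - f)² = 0`,
so `f` is invariant under `σ` and `τ` and satisfies Kannappan's equation
`f(xyz) = f(xy) f(z) + f(xz) f(y) + f(x) f(yz) - 2 f(x) f(y) f(z)`. The defect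
`f(xy) - f(x) f(y)` is then a rank-one kernel `g(x) g(y)`, `g` satisfies the sine addition law, and
`χ = f + g` is multiplicative. Finally `g ∘ σ = ±g` and `g ∘ τ = -g ∘ σ`, so
`χ ∘ σ ∘ τ = f - g = χ ∘ τ ∘ σ`. -/

section Abelian

variable {M : Type*} [Monoid M] {f : M → ℂ}

theorem IsAbelianFn.apply_mul_comm (hf : IsAbelianFn f) (a b : M) : f (a * b) = f (b * a) := by
  simpa [List.ofFn_succ] using hf 2 le_rfl ![a, b] (Equiv.swap 0 1)

theorem IsAbelianFn.apply_mul_right_comm (hf : IsAbelianFn f) (a b c : M) :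
    f (a * b * c) = f (a * c * b) := by
  simpa [List.ofFn_succ, mul_assoc, Equiv.swap_apply_of_ne_of_ne] using
    hf 3 (by norm_num) ![a, b, c] (Equiv.swap 1 2)

theorem IsAbelianFn.apply_mul_right_comm_mul (hf : IsAbelianFn f) (a b c d : M) :
    f (a * b * c * d) = f (a * c * b * d) := by
  simpa [List.ofFn_succ, mul_assoc, Equiv.swap_apply_of_ne_of_ne] using
    hf 4 (by norm_num) ![a, b, c, d] (Equiv.swap 1 2)

end Abelian

section Involution

variable {M : Type*} [Monoid M] {σ : M → M}

theorem map_one_of_map_mul_of_involutive (hmul : ∀ x y, σ (x * y) = σ x * σ y)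
    (hinv : Function.Involutive σ) : σ 1 = 1 :=
  calc σ 1 = σ 1 * σ (σ 1) := by rw [hinv, mul_one]
    _ = 1 := by rw [← hmul, one_mul, hinv]

theorem map_one_of_map_mul_rev_of_involutive (hmul : ∀ x y, σ (x * y) = σ y * σ x)
    (hinv : Function.Involutive σ) : σ 1 = 1 :=
  calc σ 1 = σ (σ 1) * σ 1 := by rw [hinv, one_mul]
    _ = 1 := by rw [← hmul, one_mul, hinv]

end Involution

section Field

variable {α K : Type*} [Field K]

theorem eq_or_eq_neg_of_forall_mul_eq_mul {φ ψ : α → K} (h : ∀ x y, ψ x * ψ y = φ x * φ y) :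
    (∀ x, ψ x = φ x) ∨ ∀ x, ψ x = -φ x := by
  by_cases hφ : ∀ x, φ x = 0
  · left
    intro x
    rw [hφ]
    simpa [hφ] using h x x
  obtain ⟨b, hb⟩ := not_forall.mp hφ
  rcases mul_self_eq_mul_self_iff.mp (h b b) with hψb | hψb
  · exact Or.inl fun x => mul_right_cancel₀ hb (by rw [← h x b, hψb])
  · exact Or.inr fun x => mul_right_cancel₀ hb (by linear_combination -h x b + ψ x * hψb)

theorem exists_eq_mul_of_mul_eq_mul [IsAlgClosed K] (D : α → α → K)
    (hD : ∀ x y u v, D x y * D u v = D x u * D y v) : ∃ g : α → K, ∀ x y, D x y = g x * g y := by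
  by_cases hdiag : ∀ b, D b b = 0
  · refine ⟨0, fun x y => ?_⟩
    simpa [hdiag] using hD x y x y
  obtain ⟨b, hb⟩ := not_forall.mp hdiag
  obtain ⟨c, hc⟩ := IsAlgClosed.exists_eq_mul_self (D b b)
  refine ⟨fun x => D x b / c, fun x y => ?_⟩
  rw [div_mul_div_comm, ← hc, eq_div_iff hb, hD]

end Field

namespace VariantDAlembert

variable {M : Type*} [Monoid M] {σ τ : M → M} {f g : M → ℂ}

theorem apply_one (hσ1 : σ 1 = 1) (hτ1 : τ 1 = 1)
    (hE : ∀ x y, f (x * σ y) + f (x * τ y) = 2 * f x * f y) (hf : f ≠ 0) : f 1 = 1 := by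
  obtain ⟨x, hx⟩ := Function.ne_iff.mp hf
  have h := hE x 1
  rw [hσ1, hτ1, mul_one] at h
  exact mul_left_cancel₀ (mul_ne_zero two_ne_zero hx) (by rw [← h]; ring)

theorem add_apply_mul_map_mul_map (hf : IsAbelianFn f) (hσ : ∀ x y, σ (x * y) = σ x * σ y)
    (hτ : ∀ x y, τ (x * y) = τ y * τ x) (hE : ∀ x y, f (x * σ y) + f (x * τ y) = 2 * f x * f y)
    (x y z : M) : f (x * σ y * σ z) + f (x * τ y * τ z) = 2 * f x * f (y * z) := by
  rw [hf.apply_mul_right_comm x (τ y), ← hE, hσ, hτ, mul_assoc, mul_assoc]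

theorem apply_mul_mul (hf : IsAbelianFn f) (hσ : Function.Involutive σ)
    (hE : ∀ x y, f (x * σ y) + f (x * τ y) = 2 * f x * f y)
    (hK : ∀ x y z, f (x * σ y * σ z) + f (x * τ y * τ z) = 2 * f x * f (y * z)) (x y z : M) :
    f (x * y * z) = f (x * y) * f (σ z) + f (x * z) * f (σ y)
      - 2 * f x * f (σ y) * f (σ z) + f x * f (σ y * σ z) := by
  have h₁ := hE (x * y) (σ z)
  have h₂ := hE (x * z) (σ y)
  have h₃ := hE (x * σ (σ y)) (σ z)
  have h₄ := hE (x * τ (σ y)) (σ z)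
  have h₅ := hK x (σ y) (σ z)
  have h₆ := hE x (σ y)
  simp only [hσ _] at h₁ h₂ h₃ h₄ h₅ h₆
  rw [hf.apply_mul_right_comm x z, hf.apply_mul_right_comm x z] at h₂
  -- `h₃ + h₄ - h₅ + 2 f(σ z) h₆` evaluates the two mixed terms of `h₁ + h₂`
  linear_combination (h₁ + h₂ - h₃ - h₄ + h₅ - 2 * f (σ z) * h₆) / 2

theorem apply_map (hf : IsAbelianFn f) (hσ : Function.Involutive σ) (hτ : Function.Involutive τ)
    (hE : ∀ x y, f (x * σ y) + f (x * τ y) = 2 * f x * f y)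
    (hK : ∀ x y z, f (x * σ y * σ z) + f (x * τ y * τ z) = 2 * f x * f (y * z)) (hf1 : f 1 = 1)
    (y : M) : f (σ y) = f y := by
  have hS := apply_mul_mul hf hσ hE hK 1 y y
  have hT := apply_mul_mul hf hτ (fun x y => (add_comm _ _).trans (hE x y))
    (fun x y z => (add_comm _ _).trans (hK x y z)) 1 y y
  have hK₁ := hK 1 y y
  have hE₁ := hE 1 y
  simp only [one_mul, hf1] at hS hT hK₁ hE₁
  -- with `s = f (σ y)`, `t = f (τ y)`, `a = f y`: `s + t = 2 a` and `s² + t² = a (s + t)`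
  have hsq : (f (σ y) - f y) * (f (σ y) - f y) = 0 := by
    linear_combination (hS + hT + hK₁) / 4 + (f (σ y) - f (τ y) - f y) / 2 * hE₁
  exact sub_eq_zero.mp (mul_self_eq_zero.mp hsq)

theorem apply_map_rev (hE : ∀ x y, f (x * σ y) + f (x * τ y) = 2 * f x * f y) (hf1 : f 1 = 1)
    (hfσ : ∀ y, f (σ y) = f y) (y : M) : f (τ y) = f y := by
  have h := hE 1 y
  rw [one_mul, one_mul, hf1, hfσ] at h
  linear_combination h

theorem kannappan (hf : IsAbelianFn f) (hσ : ∀ x y, σ (x * y) = σ x * σ y)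
    (hσ' : Function.Involutive σ) (hE : ∀ x y, f (x * σ y) + f (x * τ y) = 2 * f x * f y)
    (hK : ∀ x y z, f (x * σ y * σ z) + f (x * τ y * τ z) = 2 * f x * f (y * z))
    (hfσ : ∀ y, f (σ y) = f y) (x y z : M) :
    f (x * y * z) = f (x * y) * f z + f (x * z) * f y + f x * f (y * z) - 2 * f x * f y * f z := by
  rw [apply_mul_mul hf hσ' hE hK, ← hσ, hfσ, hfσ, hfσ]
  ring

theorem defect_mul_defect (hf : IsAbelianFn f)
    (hK : ∀ x y z, f (x * y * z)
      = f (x * y) * f z + f (x * z) * f y + f x * f (y * z) - 2 * f x * f y * f z)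
    (x y u v : M) :
    (f (x * y) - f x * f y) * (f (u * v) - f u * f v)
      = (f (x * u) - f x * f u) * (f (y * v) - f y * f v) := by
  linear_combination -hK (x * y) u v + hK (x * u) y v + hf.apply_mul_right_comm_mul x y u v
    - f v * hK x y u - f u * hK x y v + f v * hK x u y + f y * hK x u v
    - f x * f v * hf.apply_mul_comm y u

theorem exists_sine (hf : IsAbelianFn f)
    (hK : ∀ x y z, f (x * y * z)
      = f (x * y) * f z + f (x * z) * f y + f x * f (y * z) - 2 * f x * f y * f z) :
    ∃ g : M → ℂ, (∀ x y, f (x * y) = f x * f y + g x * g y) ∧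
      ∀ x y, g (x * y) = g x * f y + f x * g y := by
  obtain ⟨g, hg⟩ := exists_eq_mul_of_mul_eq_mul (fun x y => f (x * y) - f x * f y)
    (defect_mul_defect hf hK)
  refine ⟨g, fun x y => by linear_combination hg x y, fun x y => ?_⟩
  by_cases hg0 : ∀ z, g z = 0
  · simp [hg0]
  obtain ⟨z, hz⟩ := not_forall.mp hg0
  apply mul_right_cancel₀ hz
  linear_combination hK x y z - hg (x * y) z + f y * hg x z + f x * hg y z

theorem sine_map_eq_or_eq_neg (hσ : ∀ x y, σ (x * y) = σ x * σ y) (hfσ : ∀ y, f (σ y) = f y)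
    (hadd : ∀ x y, f (x * y) = f x * f y + g x * g y) :
    (∀ x, g (σ x) = g x) ∨ ∀ x, g (σ x) = -g x :=
  eq_or_eq_neg_of_forall_mul_eq_mul fun x y => by
    have hσxy := hadd (σ x) (σ y)
    rw [← hσ, hfσ, hfσ, hfσ] at hσxy
    linear_combination hadd x y - hσxy

theorem sine_map_rev (hE : ∀ x y, f (x * σ y) + f (x * τ y) = 2 * f x * f y)
    (hfσ : ∀ y, f (σ y) = f y) (hfτ : ∀ y, f (τ y) = f y)
    (hadd : ∀ x y, f (x * y) = f x * f y + g x * g y) (y : M) : g (τ y) = -g (σ y) := by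
  by_cases hg0 : ∀ x, g x = 0
  · simp [hg0]
  obtain ⟨x, hx⟩ := not_forall.mp hg0
  apply mul_left_cancel₀ hx
  linear_combination hE x y - hadd x (σ y) - hadd x (τ y) - f x * hfσ y - f x * hfτ y

theorem exists_mul_of_sine (hσ : Function.Involutive σ) (hfσ : ∀ y, f (σ y) = f y)
    (hfτ : ∀ y, f (τ y) = f y) (hadd : ∀ x y, f (x * y) = f x * f y + g x * g y)
    (hsine : ∀ x y, g (x * y) = g x * f y + f x * g y) (hgτ : ∀ x, g (τ x) = -g (σ x))
    (hgσ : (∀ x, g (σ x) = g x) ∨ ∀ x, g (σ x) = -g x) :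
    ∃ χ : M → ℂ, (∀ x y : M, χ (x * y) = χ x * χ y) ∧
      (∀ x : M, χ (σ (τ x)) = χ (τ (σ x))) ∧
      ((∀ x : M, χ (σ x) = χ x) ∨ (∀ x : M, χ (τ x) = χ x)) ∧
      (∀ x : M, f x = (χ x + χ (σ (τ x))) / 2) := by
  have hgστ : ∀ x, g (σ (τ x)) = -g x := by
    rcases hgσ with h | h <;> intro x <;> simp [h, hgτ]
  have hgτσ : ∀ x, g (τ (σ x)) = -g x := fun x => by rw [hgτ, hσ]
  refine ⟨f + g, fun x y => ?_, fun x => ?_, ?_, fun x => ?_⟩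
  · simp only [Pi.add_apply, hadd, hsine]
    ring
  · simp only [Pi.add_apply, hfσ, hfτ, hgστ, hgτσ]
  · rcases hgσ with h | h
    · exact Or.inl fun x => by simp only [Pi.add_apply, hfσ, h]
    · exact Or.inr fun x => by simp only [Pi.add_apply, hfτ, hgτ, h, neg_neg]
  · simp only [Pi.add_apply, hfσ, hfτ, hgστ]
    ring

end VariantDAlembert

open VariantDAlembert

theorem stmt5 {M : Type*} [Monoid M] (σ τ : M → M)
    (hσmul : ∀ x y : M, σ (x * y) = σ x * σ y) (hσinv : ∀ x : M, σ (σ x) = x)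
    (hτmul : ∀ x y : M, τ (x * y) = τ y * τ x) (hτinv : ∀ x : M, τ (τ x) = x)
    (f : M → ℂ) (hf : f ≠ 0) (habel : IsAbelianFn f)
    (heq : ∀ x y : M, f (x * σ y) + f (τ y * x) = 2 * f x * f y) :
    ∃ χ : M → ℂ, (∀ x y : M, χ (x * y) = χ x * χ y) ∧
      (∀ x : M, χ (σ (τ x)) = χ (τ (σ x))) ∧
      ((∀ x : M, χ (σ x) = χ x) ∨ (∀ x : M, χ (τ x) = χ x)) ∧
      (∀ x : M, f x = (χ x + χ (σ (τ x))) / 2) := by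
  have hE : ∀ x y, f (x * σ y) + f (x * τ y) = 2 * f x * f y := fun x y => by
    rw [habel.apply_mul_comm x (τ y), heq]
  have hK := add_apply_mul_map_mul_map habel hσmul hτmul hE
  have hf1 := apply_one (map_one_of_map_mul_of_involutive hσmul hσinv)
    (map_one_of_map_mul_rev_of_involutive hτmul hτinv) hE hf
  have hfσ := apply_map habel hσinv hτinv hE hK hf1
  have hfτ := apply_map_rev hE hf1 hfσ
  obtain ⟨g, hadd, hsine⟩ := exists_sine habel (kannappan habel hσmul hσinv hE hK hfσ)
  exact exists_mul_of_sine hσinv hfσ hfτ hadd hsine (sine_map_rev hE hfσ hfτ hadd)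
    (sine_map_eq_or_eq_neg hσmul hfσ hadd)
end

section
/- Suppose σ(z₀)z₀ ≠ e, and let f : G → ℂ be a non-zero continuous solution of the functional equation f(y⁻¹xz₀) − f(xσ(y)z₀) = 2f(x)f(y) for all x, y ∈ G. Then there exists a continuous multiplicative function χ : G → ℂ* such that either (a) χ∘σ = χ, χ(z₀)² = −1 and f(x) = (χ(x) − χ(x⁻¹))/(2χ(z₀)) for all x ∈ G, or (b) χ(x) = χ(x⁻¹) for all x ∈ G, χ(σ(z₀)z₀) = −1 and f(x) = (χ(x) − χ(σ(x)))/(2χ(z₀)) for all x ∈ G. -/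
/-!
Put `g x = f (x * z₀)` and `β = f z₀⁻¹`. Taking `y = z₀` in the equation shows that right
translation by the central element `σ z₀ * z₀` multiplies `f` by `1 - 2 f z₀`, and comparing this
with the antisymmetry `f (σ x⁻¹) = -f x` forces `f z₀ = 1`. The equation at `(x, y z₀)` and at
`(x z₀⁻¹, y)` then give `f x⁻¹ = β f x` with `β² = 1`, together with the addition laws
`f (x y) = f x g y + g x f y` and `g (x y) = g x g y + β f x f y` of a sine and a cosine.
Hence `χ = g + c f` is multiplicative as soon as `c² = β`, with `χ z₀ = c`; the choices `c = i`
for `β = -1` and `c = 1` for `β = 1` give the two alternatives.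
-/

open Function

section

variable {G K : Type*} [Group G] [Field K]

def IsVanVleckSolution (σ : G →* G) (z₀ : G) (f : G → K) : Prop :=
  ∀ x y : G, f (y⁻¹ * x * z₀) - f (x * σ y * z₀) = 2 * f x * f y

theorem Subgroup.inv_mul_cancel_comm_of_mem_center {z : G} (hz : z ∈ Subgroup.center G) (a : G) :
    z⁻¹ * a * z = a := by
  rw [mul_assoc, Subgroup.mem_center_iff.mp hz a, inv_mul_cancel_left]

namespace IsVanVleckSolution

variable {σ : G →* G} {z₀ : G} {f : G → K}

theorem apply_one [NeZero (2 : K)] (h : IsVanVleckSolution σ z₀ f) (hf : f ≠ 0) : f 1 = 0 := by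
  obtain ⟨x, hx⟩ : ∃ x, f x ≠ 0 := Function.ne_iff.mp hf
  have hx1 := h x 1
  rw [inv_one, one_mul, map_one, mul_one, sub_self, eq_comm] at hx1
  exact (mul_eq_zero.mp hx1).resolve_left (mul_ne_zero two_ne_zero hx)

theorem apply_map_mul [NeZero (2 : K)] (h : IsVanVleckSolution σ z₀ f) (hf : f ≠ 0) (y : G) :
    f (σ y * z₀) = f (y⁻¹ * z₀) := by
  have h1y := h 1 y
  rw [mul_one, one_mul, h.apply_one hf, mul_zero, zero_mul, sub_eq_zero] at h1y
  exact h1y.symm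

theorem apply_mul_map_mul (h : IsVanVleckSolution σ z₀ f) (hz : z₀ ∈ Subgroup.center G)
    (x : G) : f (x * (σ z₀ * z₀)) = (1 - 2 * f z₀) * f x := by
  have hxz := h x z₀
  rw [Subgroup.inv_mul_cancel_comm_of_mem_center hz, mul_assoc x] at hxz
  linear_combination -hxz

theorem apply_map_inv [NeZero (2 : K)] (h : IsVanVleckSolution σ z₀ f) (hσ : Involutive σ)
    (hf : f ≠ 0) (x : G) : f (σ x⁻¹) = -f x := by
  -- the equation at `(σ x⁻¹, y)` is the one at `(x, y)` with its left side negated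
  have key : ∀ y, 2 * f y * (f x + f (σ x⁻¹)) = 0 := by
    intro y
    have e := h (σ x⁻¹) y
    rw [show y⁻¹ * σ x⁻¹ = σ (σ y⁻¹ * x⁻¹) by simp [hσ _], ← map_mul, h.apply_map_mul hf,
      h.apply_map_mul hf, show (σ y⁻¹ * x⁻¹)⁻¹ = x * σ y by simp,
      show (x⁻¹ * y)⁻¹ = y⁻¹ * x by group] at e
    linear_combination -(h x y + e)
  obtain ⟨y, hy⟩ : ∃ y, f y ≠ 0 := Function.ne_iff.mp hf
  have hsum := (mul_eq_zero.mp (key y)).resolve_left (mul_ne_zero two_ne_zero hy)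
  linear_combination hsum

theorem apply_z₀ [NeZero (2 : K)] (h : IsVanVleckSolution σ z₀ f) (hσ : Involutive σ)
    (hz : z₀ ∈ Subgroup.center G) (hf : f ≠ 0) : f z₀ = 1 := by
  have key : ∀ u, 2 * (1 - f z₀) * f u = 0 := by
    intro u
    have e := h.apply_mul_map_mul hz (σ u⁻¹)
    rw [← mul_assoc, ← map_mul, h.apply_map_mul hf, h.apply_map_inv hσ hf, mul_inv_rev, inv_inv,
      Subgroup.inv_mul_cancel_comm_of_mem_center hz] at e
    linear_combination e
  obtain ⟨u, hu⟩ : ∃ u, f u ≠ 0 := Function.ne_iff.mp hf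
  have h1 := (mul_eq_zero.mp ((mul_eq_zero.mp (key u)).resolve_right hu)).resolve_left two_ne_zero
  linear_combination -h1

theorem apply_inv_mul_add (h : IsVanVleckSolution σ z₀ f) (hz : z₀ ∈ Subgroup.center G)
    (hz1 : f z₀ = 1) (x y : G) : f (y⁻¹ * x) + f (x * σ y) = 2 * f x * f (y * z₀) := by
  have e := h x (y * z₀)
  rw [map_mul, ← mul_assoc, mul_assoc (x * σ y), h.apply_mul_map_mul hz, hz1,
    show (y * z₀)⁻¹ * x * z₀ = z₀⁻¹ * (y⁻¹ * x) * z₀ by group,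
    Subgroup.inv_mul_cancel_comm_of_mem_center hz] at e
  linear_combination e

theorem apply_inv_mul_sub (h : IsVanVleckSolution σ z₀ f) (hz : z₀ ∈ Subgroup.center G)
    (x y : G) : f (y⁻¹ * x) - f (x * σ y) = 2 * f (x * z₀⁻¹) * f y := by
  have e := h (x * z₀⁻¹) y
  rwa [show y⁻¹ * (x * z₀⁻¹) * z₀ = y⁻¹ * x by group,
    show x * z₀⁻¹ * σ y * z₀ = x * (z₀⁻¹ * σ y * z₀) by group,
    Subgroup.inv_mul_cancel_comm_of_mem_center hz] at e

theorem apply_inv_mul [NeZero (2 : K)] (h : IsVanVleckSolution σ z₀ f)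
    (hz : z₀ ∈ Subgroup.center G) (hz1 : f z₀ = 1) (x y : G) :
    f (y⁻¹ * x) = f x * f (y * z₀) + f (x * z₀⁻¹) * f y := by
  refine mul_left_cancel₀ (two_ne_zero (α := K)) ?_
  linear_combination h.apply_inv_mul_add hz hz1 x y + h.apply_inv_mul_sub hz x y

theorem apply_inv_mul_mul [NeZero (2 : K)] (h : IsVanVleckSolution σ z₀ f)
    (hz : z₀ ∈ Subgroup.center G) (hz1 : f z₀ = 1) (x y : G) :
    f (y⁻¹ * x * z₀) = f (x * z₀) * f (y * z₀) + f x * f y := by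
  have e := h.apply_inv_mul_add hz hz1 (x * z₀) y
  rw [mul_assoc x, ← Subgroup.mem_center_iff.mp hz, ← mul_assoc, ← mul_assoc] at e
  refine mul_left_cancel₀ (two_ne_zero (α := K)) ?_
  linear_combination e + h x y

theorem apply_inv [NeZero (2 : K)] (h : IsVanVleckSolution σ z₀ f)
    (hz : z₀ ∈ Subgroup.center G) (hz1 : f z₀ = 1) (y : G) : f y⁻¹ = f z₀⁻¹ * f y := by
  simpa [h.apply_one (by rintro rfl; simp at hz1)] using h.apply_inv_mul hz hz1 1 y

theorem apply_z₀_inv_sq [NeZero (2 : K)] (h : IsVanVleckSolution σ z₀ f)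
    (hz : z₀ ∈ Subgroup.center G) (hz1 : f z₀ = 1) : f z₀⁻¹ ^ 2 = 1 := by
  have e := h.apply_inv hz hz1 z₀⁻¹
  rw [inv_inv, hz1] at e
  linear_combination -e

theorem apply_inv_mul_z₀ [NeZero (2 : K)] (h : IsVanVleckSolution σ z₀ f)
    (hz : z₀ ∈ Subgroup.center G) (hz1 : f z₀ = 1) (y : G) : f (y⁻¹ * z₀) = f (y * z₀) := by
  simpa [h.apply_one (by rintro rfl; simp at hz1), hz1] using h.apply_inv_mul_mul hz hz1 1 y

theorem apply_mul_z₀_inv [NeZero (2 : K)] (h : IsVanVleckSolution σ z₀ f)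
    (hz : z₀ ∈ Subgroup.center G) (hz1 : f z₀ = 1) (x : G) :
    f (x * z₀⁻¹) = f z₀⁻¹ * f (x * z₀) := by
  rw [← h.apply_inv_mul_z₀ hz hz1, Subgroup.mem_center_iff.mp hz, ← h.apply_inv hz hz1,
    mul_inv_rev, inv_inv]

theorem apply_mul [NeZero (2 : K)] (h : IsVanVleckSolution σ z₀ f)
    (hz : z₀ ∈ Subgroup.center G) (hz1 : f z₀ = 1) (x y : G) :
    f (x * y) = f x * f (y * z₀) + f (x * z₀) * f y := by
  have e := h.apply_inv_mul hz hz1 y x⁻¹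
  rw [inv_inv, h.apply_inv_mul_z₀ hz hz1, h.apply_mul_z₀_inv hz hz1, h.apply_inv hz hz1 x] at e
  linear_combination e + f (y * z₀) * f x * h.apply_z₀_inv_sq hz hz1

theorem apply_mul_mul [NeZero (2 : K)] (h : IsVanVleckSolution σ z₀ f)
    (hz : z₀ ∈ Subgroup.center G) (hz1 : f z₀ = 1) (x y : G) :
    f (x * y * z₀) = f (x * z₀) * f (y * z₀) + f z₀⁻¹ * f x * f y := by
  have e := h.apply_inv_mul_mul hz hz1 y x⁻¹
  rw [inv_inv, h.apply_inv_mul_z₀ hz hz1, h.apply_inv hz hz1] at e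
  linear_combination e

end IsVanVleckSolution

def vanVleckChar (z₀ : G) (f : G → K) (c : K) (x : G) : K :=
  f (x * z₀) + c * f x

theorem continuous_vanVleckChar [TopologicalSpace G] [ContinuousMul G] [TopologicalSpace K]
    [ContinuousAdd K] [ContinuousMul K] {z₀ : G} {f : G → K} (hf : Continuous f) (c : K) :
    Continuous (vanVleckChar z₀ f c) :=
  (hf.comp (continuous_mul_const z₀)).add (continuous_const.mul hf)

namespace IsVanVleckSolution

variable {σ : G →* G} {z₀ : G} {f : G → K} {c : K}

theorem vanVleckChar_mul [NeZero (2 : K)] (h : IsVanVleckSolution σ z₀ f)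
    (hz : z₀ ∈ Subgroup.center G) (hz1 : f z₀ = 1) (hc : c ^ 2 = f z₀⁻¹) (x y : G) :
    vanVleckChar z₀ f c (x * y) = vanVleckChar z₀ f c x * vanVleckChar z₀ f c y := by
  simp only [vanVleckChar]
  rw [h.apply_mul_mul hz hz1 x y, h.apply_mul hz hz1 x y]
  linear_combination -(f x * f y) * hc

theorem vanVleckChar_one [NeZero (2 : K)] (h : IsVanVleckSolution σ z₀ f) (hz1 : f z₀ = 1) :
    vanVleckChar z₀ f c 1 = 1 := by
  simp [vanVleckChar, hz1, h.apply_one (by rintro rfl; simp at hz1)]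

theorem vanVleckChar_ne_zero [NeZero (2 : K)] (h : IsVanVleckSolution σ z₀ f)
    (hz : z₀ ∈ Subgroup.center G) (hz1 : f z₀ = 1) (hc : c ^ 2 = f z₀⁻¹) (x : G) :
    vanVleckChar z₀ f c x ≠ 0 := by
  refine left_ne_zero_of_mul_eq_one (b := vanVleckChar z₀ f c x⁻¹) ?_
  rw [← h.vanVleckChar_mul hz hz1 hc, mul_inv_cancel, h.vanVleckChar_one hz1]

theorem vanVleckChar_z₀ [NeZero (2 : K)] (h : IsVanVleckSolution σ z₀ f)
    (hz : z₀ ∈ Subgroup.center G) (hz1 : f z₀ = 1) : vanVleckChar z₀ f c z₀ = c := by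
  rw [vanVleckChar, ← h.apply_inv_mul_z₀ hz hz1, inv_mul_cancel,
    h.apply_one (by rintro rfl; simp at hz1), hz1, zero_add, mul_one]

theorem vanVleckChar_sub_inv [NeZero (2 : K)] (h : IsVanVleckSolution σ z₀ f)
    (hz : z₀ ∈ Subgroup.center G) (hz1 : f z₀ = 1) (x : G) :
    vanVleckChar z₀ f c x - vanVleckChar z₀ f c x⁻¹ = c * (1 - f z₀⁻¹) * f x := by
  rw [vanVleckChar, vanVleckChar, h.apply_inv_mul_z₀ hz hz1, h.apply_inv hz hz1]
  ring

theorem vanVleckChar_sub_map [NeZero (2 : K)] (h : IsVanVleckSolution σ z₀ f) (hσ : Involutive σ)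
    (hz : z₀ ∈ Subgroup.center G) (hz1 : f z₀ = 1) (x : G) :
    vanVleckChar z₀ f c x - vanVleckChar z₀ f c (σ x) = c * (1 + f z₀⁻¹) * f x := by
  have hf : f ≠ 0 := by rintro rfl; simp at hz1
  have hfσ : f (σ x) = -f x⁻¹ := by simpa using h.apply_map_inv hσ hf x⁻¹
  rw [vanVleckChar, vanVleckChar, h.apply_map_mul hf, h.apply_inv_mul_z₀ hz hz1, hfσ,
    h.apply_inv hz hz1]
  ring

end IsVanVleckSolution

end

theorem stmt17_general {G : Type*} [Group G] [TopologicalSpace G] [IsTopologicalGroup G] (σ : G → G)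
    (hσmul : ∀ x y : G, σ (x * y) = σ x * σ y) (hσinv : ∀ x : G, σ (σ x) = x)
    (z₀ : G) (hz₀ : z₀ ∈ Subgroup.center G)
    (f : G → ℂ) (hf : f ≠ 0) (hfcont : Continuous f)
    (heq : ∀ x y : G, f (y⁻¹ * x * z₀) - f (x * σ y * z₀) = 2 * f x * f y) :
    ∃ χ : G → ℂ, Continuous χ ∧ (∀ x : G, χ x ≠ 0) ∧
      (∀ x y : G, χ (x * y) = χ x * χ y) ∧
      (((∀ x : G, χ (σ x) = χ x) ∧ χ z₀ ^ 2 = -1 ∧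
          (∀ x : G, f x = (χ x - χ x⁻¹) / (2 * χ z₀))) ∨
        ((∀ x : G, χ x = χ x⁻¹) ∧ χ (σ z₀ * z₀) = -1 ∧
          (∀ x : G, f x = (χ x - χ (σ x)) / (2 * χ z₀)))) := by
  let σ' : G →* G := MonoidHom.mk' σ hσmul
  have h : IsVanVleckSolution σ' z₀ f := heq
  have hz1 : f z₀ = 1 := h.apply_z₀ hσinv hz₀ hf
  have hχz (c : ℂ) : vanVleckChar z₀ f c z₀ = c := h.vanVleckChar_z₀ hz₀ hz1
  have hχσ (c : ℂ) (x : G) : vanVleckChar z₀ f c x - vanVleckChar z₀ f c (σ x) =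
      c * (1 + f z₀⁻¹) * f x := h.vanVleckChar_sub_map hσinv hz₀ hz1 x
  rcases sq_eq_one_iff.mp (h.apply_z₀_inv_sq hz₀ hz1) with hβ | hβ
  · have hc : (1 : ℂ) ^ 2 = f z₀⁻¹ := by rw [hβ, one_pow]
    refine ⟨_, continuous_vanVleckChar hfcont 1, h.vanVleckChar_ne_zero hz₀ hz1 hc,
      h.vanVleckChar_mul hz₀ hz1 hc, Or.inr ⟨fun x => ?_, ?_, fun x => ?_⟩⟩
    · linear_combination h.vanVleckChar_sub_inv (c := 1) hz₀ hz1 x - f x * hβ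
    · have hσz := hχσ 1 z₀
      rw [hχz, hz1, hβ] at hσz
      rw [h.vanVleckChar_mul hz₀ hz1 hc, hχz]
      linear_combination -hσz
    · rw [hχz, hχσ, hβ]
      ring
  · have hc : Complex.I ^ 2 = f z₀⁻¹ := by rw [hβ, Complex.I_sq]
    refine ⟨_, continuous_vanVleckChar hfcont _, h.vanVleckChar_ne_zero hz₀ hz1 hc,
      h.vanVleckChar_mul hz₀ hz1 hc, Or.inl ⟨fun x => ?_, by rw [hχz, Complex.I_sq], fun x => ?_⟩⟩
    · linear_combination -hχσ Complex.I x - Complex.I * f x * hβ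
    · rw [hχz, h.vanVleckChar_sub_inv hz₀ hz1, hβ]
      field_simp
      ring

theorem stmt17 {G : Type*} [Group G] [TopologicalSpace G] [IsTopologicalGroup G] (σ : G → G)
    (hσcont : Continuous σ)
    (hσmul : ∀ x y : G, σ (x * y) = σ x * σ y) (hσinv : ∀ x : G, σ (σ x) = x)
    (z₀ : G) (hz₀ : z₀ ∈ Subgroup.center G) (hz : σ z₀ * z₀ ≠ 1)
    (f : G → ℂ) (hf : f ≠ 0) (hfcont : Continuous f)
    (heq : ∀ x y : G, f (y⁻¹ * x * z₀) - f (x * σ y * z₀) = 2 * f x * f y) :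
    ∃ χ : G → ℂ, Continuous χ ∧ (∀ x : G, χ x ≠ 0) ∧
      (∀ x y : G, χ (x * y) = χ x * χ y) ∧
      (((∀ x : G, χ (σ x) = χ x) ∧ χ z₀ ^ 2 = -1 ∧
          (∀ x : G, f x = (χ x - χ x⁻¹) / (2 * χ z₀))) ∨
        ((∀ x : G, χ x = χ x⁻¹) ∧ χ (σ z₀ * z₀) = -1 ∧
          (∀ x : G, f x = (χ x - χ (σ x)) / (2 * χ z₀)))) :=
  stmt17_general σ hσmul hσinv z₀ hz₀ f hf hfcont heq
end
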